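/- Let G be a finite group of even order and let S ⊆ G be a symmetric subset (S = S⁻¹, 1 ∉ S) that generates G. Then the Cayley graph of G with respect to S has a perfect matching. -/

import Mathlib

/-- The Cayley graph of a group `G` with respect to a subset `S`: distinct vertices `v, w`
are adjacent if and only if `v⁻¹ * w ∈ S` or `w⁻¹ * v ∈ S` (for a symmetric set `S` with
`S = S⁻¹` these two conditions agree, recovering the usual definition). -/
def cayleyGraph {G : Type*} [Group G] (S : Set G) : SimpleGraph G where
  Adj v w := v ≠ w ∧ (v⁻¹ * w ∈ S ∨ w⁻¹ * v ∈ S)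
  symm := by
    refine ⟨?_⟩
    intro v w h
    exact ⟨fun hvw => h.1 hvw.symm, h.2.symm⟩
  loopless := ⟨fun v h => h.1 rfl⟩

/-
A connected vertex-transitive graph with an even number of vertices has a perfect matching, and
a Cayley graph is vertex-transitive (by left translations) and connected (as `S` generates `G`).
For the graph statement, Gallai's exchange argument shows that no maximum matching leaves two
vertices unmatched; as the unmatched vertices are the fixed points of an involution, their number
has the parity of the number of vertices, so it is `0`. Alternating paths appear as the orbits of
the dihedral group generated by two matchings `f`, `g`, seen as involutions: such an orbit cannot
contain both two fixed points of `f` and a fixed point of `g`.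
-/

open Finset Function Equiv

namespace Function.Involutive

variable {α : Type*} {f g : α → α} (hf : Involutive f) (hg : Involutive g)

def rotation : Perm α := hf.toPerm f * hg.toPerm g

lemma apply_rotation_zpow (k : ℤ) (x : α) :
    f ((rotation hf hg ^ k) x) = (rotation hf hg ^ (-k)) (f x) := by
  have h : SemiconjBy (hf.toPerm f) (rotation hf hg) (rotation hf hg)⁻¹ := by
    ext y
    simp [rotation, hf (g y)]
  simpa [zpow_neg] using congrArg (· x) (h.zpow_right k).eq

lemma apply_rotation_zpow' (k : ℤ) (x : α) :
    g ((rotation hf hg ^ k) x) = (rotation hf hg ^ (-k - 1)) (f x) := by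
  have h : g ((rotation hf hg ^ k) x) = f ((rotation hf hg ^ (1 + k)) x) := by
    simp [zpow_one_add, rotation, hf (g _)]
  rw [h, apply_rotation_zpow hf hg, neg_add_rev, sub_eq_add_neg]

variable {u : α}

lemma sameCycle_rotation_apply_left (hu : f u = u) {x : α} (hx : (rotation hf hg).SameCycle u x) :
    (rotation hf hg).SameCycle u (f x) := by
  obtain ⟨k, rfl⟩ := hx
  exact ⟨-k, by rw [apply_rotation_zpow hf hg, hu]⟩

lemma sameCycle_rotation_apply_right (hu : f u = u) {x : α} (hx : (rotation hf hg).SameCycle u x) :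
    (rotation hf hg).SameCycle u (g x) := by
  obtain ⟨k, rfl⟩ := hx
  exact ⟨-k - 1, by rw [apply_rotation_zpow' hf hg, hu]⟩

/-- With `σ = rotation hf hg`: since `f` conjugates `σ` to `σ⁻¹` and fixes `u`, a fixed point
`σ ^ a u` of `f` makes `2a` a period of `u`, and a fixed point `σ ^ c u` of `g = f * σ` makes
`2c + 1` one. Then so is `a - b = (2c + 1)(a - b) - 2ac + 2bc`, hence two fixed points
`σ ^ a u`, `σ ^ b u` of `f` coincide. -/
theorem apply_ne_of_sameCycle_rotation (hu : f u = u) {x y z : α}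
    (hx : (rotation hf hg).SameCycle u x)
    (hy : (rotation hf hg).SameCycle u y) (hz : (rotation hf hg).SameCycle u z)
    (hfx : f x = x) (hfy : f y = y) (hxy : x ≠ y) : g z ≠ z := by
  set σ := rotation hf hg
  obtain ⟨a, rfl⟩ := hx
  obtain ⟨b, rfl⟩ := hy
  obtain ⟨c, rfl⟩ := hz
  intro hgz
  have period {j k : ℤ} (h : (σ ^ j) u = (σ ^ k) u) :
      σ ^ (k - j) ∈ MulAction.stabilizer _ u := by
    rw [MulAction.mem_stabilizer_iff, sub_eq_neg_add, zpow_add, Perm.smul_def, Perm.mul_apply,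
      ← h, ← Perm.mul_apply, ← zpow_add, neg_add_cancel, zpow_zero, Perm.one_apply]
  have ha := period (j := -a) (k := a) (by rwa [apply_rotation_zpow hf hg, hu] at hfx)
  have hb := period (j := -b) (k := b) (by rwa [apply_rotation_zpow hf hg, hu] at hfy)
  have hc := period (j := -c - 1) (k := c) (by rwa [apply_rotation_zpow' hf hg, hu] at hgz)
  have hab : σ ^ (a - b) ∈ MulAction.stabilizer _ u := by
    have : σ ^ (a - b) =
        (σ ^ (c - (-c - 1))) ^ (a - b) * ((σ ^ (a - -a)) ^ c)⁻¹ * (σ ^ (b - -b)) ^ c := by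
      simp only [← zpow_mul, ← zpow_neg, ← zpow_add]
      ring_nf
    rw [this]
    exact mul_mem (mul_mem (zpow_mem hc _) (inv_mem (zpow_mem ha _))) (zpow_mem hb _)
  apply hxy
  calc (σ ^ a) u = (σ ^ b) ((σ ^ (a - b)) u) := by
        rw [← Perm.mul_apply, ← zpow_add, add_sub_cancel]
    _ = (σ ^ b) u := by rw [show (σ ^ (a - b)) u = u from MulAction.mem_stabilizer_iff.mp hab]

end Function.Involutive

section FixedPoints

variable {V : Type*} [Fintype V] [DecidableEq V]

lemma card_fixed_piecewise_add (f g : V → V) (P : Finset V) :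
    #{v | P.piecewise g f v = v} + #{v ∈ P | f v = v} =
      #{v | f v = v} + #{v ∈ P | g v = v} := by
  have split (h : V → V) : #{v | h v = v} = #{v ∈ P | h v = v} + #{v ∈ Pᶜ | h v = v} := by
    rw [← card_filter_add_card_filter_not (· ∈ P)]
    congr 2 <;> ext v <;> simp [and_comm]
  have hin : {v ∈ P | P.piecewise g f v = v} = {v ∈ P | g v = v} :=
    filter_congr fun v hv => by rw [P.piecewise_eq_of_mem _ _ hv]
  have hout : {v ∈ Pᶜ | P.piecewise g f v = v} = {v ∈ Pᶜ | f v = v} :=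
    filter_congr fun v hv => by rw [P.piecewise_eq_of_notMem _ _ (mem_compl.mp hv)]
  rw [split, split f, hin, hout]
  ring

lemma card_fixed_conj (f : V → V) (φ : V ≃ V) :
    #{v | φ (f (φ.symm v)) = v} = #{v | f v = v} := by
  refine card_bij' (fun v _ => φ.symm v) (fun v _ => φ v) ?_ ?_ ?_ ?_ <;>
    simp [← Equiv.eq_symm_apply]

lemma Function.Involutive.card_fixed_modEq {f : V → V} (hf : Involutive f) :
    #{v | f v = v} ≡ Fintype.card V [MOD 2] := by
  have := Equiv.Perm.card_compl_support_modEq (p := 2) (n := 1) (σ := hf.toPerm f)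
    (by ext v; simp [sq, hf v])
  rw [Equiv.Perm.support, compl_filter] at this
  simpa using this

end FixedPoints

namespace SimpleGraph

variable {V : Type*} {H : SimpleGraph V}

variable (H) in
/-- A matching of `H` encoded as an involution: `f v = v` when `v` is unmatched, otherwise `v`
is matched to `f v`. -/
def IsMatchingInvolution (f : V → V) : Prop :=
  Involutive f ∧ ∀ v, f v ≠ v → H.Adj v (f v)

namespace IsMatchingInvolution

variable {f g : V → V}

lemma piecewise [DecidableEq V] (hf : H.IsMatchingInvolution f) (hg : H.IsMatchingInvolution g)
    {P : Finset V} (hfP : ∀ v ∈ P, f v ∈ P) (hgP : ∀ v ∈ P, g v ∈ P) :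
    H.IsMatchingInvolution (P.piecewise g f) := by
  refine ⟨fun v => ?_, fun v => ?_⟩
  · by_cases hv : v ∈ P
    · simp [hv, hgP v hv, hg.1 v]
    · have : f v ∉ P := fun h => hv (hf.1 v ▸ hfP _ h)
      simp [hv, this, hf.1 v]
  · by_cases hv : v ∈ P
    · simpa [hv] using hg.2 v
    · simpa [hv] using hf.2 v

lemma _root_.SimpleGraph.Adj.isMatchingInvolution_swap [DecidableEq V] {u v : V} (h : H.Adj u v) :
    H.IsMatchingInvolution (Equiv.swap u v) := by
  refine ⟨Equiv.swap_apply_self u v, fun x hx => ?_⟩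
  rcases eq_or_ne x u with rfl | hxu
  · simpa using h
  rcases eq_or_ne x v with rfl | hxv
  · simpa using h.symm
  · exact absurd (Equiv.swap_apply_of_ne_of_ne hxu hxv) hx

lemma conj (hf : H.IsMatchingInvolution f) (φ : H ≃g H) :
    H.IsMatchingInvolution (φ ∘ f ∘ φ.symm) := by
  refine ⟨fun v => by simp [hf.1 _], fun v hv => ?_⟩
  have : f (φ.symm v) ≠ φ.symm v := fun h => hv (by simp [h])
  simpa using φ.map_adj_iff.mpr (hf.2 _ this)

lemma exists_isPerfectMatching (hf : H.IsMatchingInvolution f) (hfix : ∀ v, f v ≠ v) :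
    ∃ M : H.Subgraph, M.IsPerfectMatching := by
  refine ⟨{ verts := Set.univ
            Adj := fun v w => f v = w
            adj_sub := by rintro v _ rfl; exact hf.2 v (hfix v)
            edge_vert := fun _ => Set.mem_univ _
            symm := ⟨fun v _ h => h ▸ hf.1 v⟩ }, ?_⟩
  rw [Subgraph.isPerfectMatching_iff]
  exact fun v => ⟨f v, rfl, fun _ h => Eq.symm h⟩

end IsMatchingInvolution

lemma Connected.exists_adj_dist_add_one (hconn : H.Connected) {u v : V} (huv : u ≠ v) :
    ∃ w, H.Adj u w ∧ H.dist w v + 1 = H.dist u v := by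
  obtain ⟨p, hp⟩ := hconn.exists_walk_length_eq_dist u v
  cases p with
  | nil => exact absurd rfl huv
  | @cons _ w _ h q =>
    refine ⟨w, h, le_antisymm ?_ ?_⟩
    · rw [← hp, Walk.length_cons]
      exact Nat.add_le_add_right (dist_le q) 1
    · have := hconn.dist_triangle (u := u) (v := w) (w := v)
      rw [dist_eq_one_iff_adj.mpr h] at this
      omega

variable [Fintype V] [DecidableEq V]

variable (H) in
def IsMaxMatchingInvolution (f : V → V) : Prop :=
  H.IsMatchingInvolution f ∧ ∀ g, H.IsMatchingInvolution g → #{v | f v = v} ≤ #{v | g v = v}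

variable (H) in
lemma exists_isMaxMatchingInvolution : ∃ f, H.IsMaxMatchingInvolution f := by
  classical
  obtain ⟨f, hf, hmin⟩ := (univ.filter H.IsMatchingInvolution).exists_min_image
    (fun f => #{v | f v = v})
    ⟨id, mem_filter.mpr ⟨mem_univ _, fun _ => rfl, fun _ h => absurd rfl h⟩⟩
  exact ⟨f, (mem_filter.mp hf).2, fun g hg => hmin g (by simpa using hg)⟩

namespace IsMaxMatchingInvolution

variable {f g : V → V}

lemma not_adj (hf : H.IsMaxMatchingInvolution f) {u v : V} (hu : f u = u) (hv : f v = v)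
    (huv : u ≠ v) : ¬ H.Adj u v := by
  intro h
  have hfP : ∀ x ∈ ({u, v} : Finset V), f x ∈ ({u, v} : Finset V) := by simp [hu, hv]
  have hsP : ∀ x ∈ ({u, v} : Finset V), Equiv.swap u v x ∈ ({u, v} : Finset V) := by simp
  have hcount := card_fixed_piecewise_add f (Equiv.swap u v) {u, v}
  have hle := hf.2 _ (hf.1.piecewise h.isMatchingInvolution_swap hfP hsP)
  have hf2 : #{x ∈ ({u, v} : Finset V) | f x = x} = 2 := by
    rw [filter_true_of_mem (by simp [hu, hv]), card_pair huv]
  have hs0 : #{x ∈ ({u, v} : Finset V) | Equiv.swap u v x = x} = 0 := by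
    rw [card_eq_zero, filter_eq_empty_iff]
    simp [Equiv.swap_apply_left, Equiv.swap_apply_right, huv, huv.symm]
  omega

lemma conj (hf : H.IsMaxMatchingInvolution f) (φ : H ≃g H) :
    H.IsMaxMatchingInvolution (φ ∘ f ∘ φ.symm) :=
  ⟨hf.1.conj φ, fun g hg => (card_fixed_conj f φ.toEquiv).trans_le (hf.2 g hg)⟩

theorem exchange (hf : H.IsMaxMatchingInvolution f) (hg : H.IsMaxMatchingInvolution g)
    {u v w : V} (hu : f u = u) (hgu : g u ≠ u) (hv : f v = v) (huv : u ≠ v) (hw : g w = w) :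
    (∃ h, H.IsMaxMatchingInvolution h ∧ h w = w ∧ h v = v) ∨
      ∃ g', H.IsMaxMatchingInvolution g' ∧ g' w = w ∧
        #{x | g x = f x} < #{x | g' x = f x} := by
  -- the alternating path through `u`
  set σ := Involutive.rotation hf.1.1 hg.1.1
  set P : Finset V := {x | σ.SameCycle u x}
  have huP : u ∈ P := by simp [P, Perm.SameCycle.refl]
  have hfP : ∀ x ∈ P, f x ∈ P := by
    simpa [P] using fun x => Involutive.sameCycle_rotation_apply_left hf.1.1 hg.1.1 hu (x := x)
  have hgP : ∀ x ∈ P, g x ∈ P := by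
    simpa [P] using fun x => Involutive.sameCycle_rotation_apply_right hf.1.1 hg.1.1 hu (x := x)
  have hfg := hf.2 _ (hf.1.piecewise hg.1 hfP hgP)
  have hgf := hg.2 _ (hg.1.piecewise hf.1 hgP hfP)
  have hcount := card_fixed_piecewise_add f g P
  have hcount' := card_fixed_piecewise_add g f P
  by_cases hwP : w ∈ P
  · have hvP : v ∉ P := fun hvP =>
      Involutive.apply_ne_of_sameCycle_rotation hf.1.1 hg.1.1 hu (by simpa [P] using huP)
        (by simpa [P] using hvP) (by simpa [P] using hwP) hu hv huv hw
    refine Or.inl ⟨P.piecewise g f, ⟨hf.1.piecewise hg.1 hfP hgP, fun k hk => ?_⟩, ?_, ?_⟩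
    · have := hf.2 k hk
      omega
    · simp [hwP, hw]
    · simp [hvP, hv]
  · refine Or.inr ⟨P.piecewise f g, ⟨hg.1.piecewise hf.1 hgP hfP, fun k hk => ?_⟩, ?_, ?_⟩
    · have := hg.2 k hk
      omega
    · simp [hwP, hw]
    · refine card_lt_card ((ssubset_iff_of_subset fun x hx => ?_).mpr ⟨u, ?_, ?_⟩)
      · by_cases hxP : x ∈ P <;> simp_all
      · simp [huP]
      · simpa [hu] using hgu

/-- Gallai's argument: among maximum matchings with two distinct unmatched vertices take one
whose two unmatched vertices `u, v` are closest, and let `w` be the neighbour of `u` on a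
shortest path to `v`. A maximum matching `g` leaving `w` unmatched (a translate of `f`) and
agreeing with `f` as much as possible must match `u`; exchanging along the alternating path
from `u` gives a maximum matching with `w, v` unmatched, which are closer. -/
theorem eq_of_apply_eq_self (hconn : H.Connected) (htrans : ∀ u v, ∃ φ : H ≃g H, φ u = v)
    (hf : H.IsMaxMatchingInvolution f) {u v : V} (hu : f u = u) (hv : f v = v) : u = v := by
  suffices key : ∀ d f u v, H.IsMaxMatchingInvolution f → f u = u → f v = v → u ≠ v →
      H.dist u v ≠ d from
    by_contra fun huv => key _ f u v hf hu hv huv rfl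
  intro d
  induction d using Nat.strong_induction_on with
  | _ d ih =>
  rintro f u v hf hu hv huv rfl
  obtain ⟨w, huw, hwv⟩ := hconn.exists_adj_dist_add_one huv
  obtain rfl | hwv' := eq_or_ne w v
  · exact hf.not_adj hu hv huv huw
  have hd : 1 < H.dist u v := by
    have := hconn.pos_dist_of_ne hwv'
    omega
  obtain ⟨g, ⟨hg, hgw⟩, hgmax⟩ : ∃ g, (H.IsMaxMatchingInvolution g ∧ g w = w) ∧
      ∀ g', H.IsMaxMatchingInvolution g' ∧ g' w = w →
        #{x | g' x = f x} ≤ #{x | g x = f x} := by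
    classical
    obtain ⟨φ, rfl⟩ := htrans u w
    have hφ : φ ∘ f ∘ φ.symm ∈
        ({g | H.IsMaxMatchingInvolution g ∧ g (φ u) = φ u} : Finset (V → V)) := by
      simp [hf.conj φ, hu]
    obtain ⟨g, hg, hmax⟩ := exists_max_image _ (fun g => #{x | g x = f x}) ⟨_, hφ⟩
    exact ⟨g, by simpa using hg, fun g' hg' => hmax g' (by simpa using hg')⟩
  have hgu : g u ≠ u := fun hgu => ih 1 hd g u w hg hgu hgw huw.ne (dist_eq_one_iff_adj.mpr huw)
  obtain ⟨h, hh, hhw, hhv⟩ | ⟨g', hg', hg'w, hlt⟩ := hf.exchange hg hu hgu hv huv hgw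
  · exact ih _ (by omega) h w v hh hhw hhv hwv' rfl
  · exact (hgmax g' ⟨hg', hg'w⟩).not_gt hlt

end IsMaxMatchingInvolution

theorem Connected.exists_isPerfectMatching_of_even_card (hconn : H.Connected)
    (htrans : ∀ u v, ∃ φ : H ≃g H, φ u = v) (heven : Even (Fintype.card V)) :
    ∃ M : H.Subgraph, M.IsPerfectMatching := by
  obtain ⟨f, hf⟩ := exists_isMaxMatchingInvolution H
  have hle : #{v | f v = v} ≤ 1 := card_le_one.mpr fun u hu v hv =>
    hf.eq_of_apply_eq_self hconn htrans (mem_filter.mp hu).2 (mem_filter.mp hv).2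
  have hpar := hf.1.1.card_fixed_modEq
  have hzero : #{v | f v = v} = 0 := by
    obtain ⟨k, hk⟩ := heven
    rw [Nat.ModEq] at hpar
    omega
  exact hf.1.exists_isPerfectMatching fun v hv =>
    notMem_empty v (card_eq_zero.mp hzero ▸ mem_filter.mpr ⟨mem_univ v, hv⟩)

end SimpleGraph

section Cayley

variable {G : Type*} [Group G] (S : Set G)

def cayleyGraphMulLeft (t : G) : cayleyGraph S ≃g cayleyGraph S where
  toEquiv := Equiv.mulLeft t
  map_rel_iff' {a b} := by simp [cayleyGraph, mul_assoc]

variable {S} in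
lemma cayleyGraph_reachable_mul (x : G) {s : G} (hs : s ∈ S) :
    (cayleyGraph S).Reachable x (x * s) := by
  obtain h | h := eq_or_ne x (x * s)
  · rw [← h]
  · exact SimpleGraph.Adj.reachable ⟨h, Or.inl (by simpa using hs)⟩

lemma cayleyGraph_connected (hgen : Subgroup.closure S = ⊤) : (cayleyGraph S).Connected := by
  refine ((cayleyGraph S).connected_iff_exists_forall_reachable).mpr ⟨1, fun x => ?_⟩
  induction (hgen ▸ Subgroup.mem_top x : x ∈ Subgroup.closure S)
    using Subgroup.closure_induction_right with
  | one => rfl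
  | mul_right x _ s hs ih => exact ih.trans (cayleyGraph_reachable_mul x hs)
  | mul_inv_cancel x _ s hs ih =>
    exact ih.trans (by simpa using (cayleyGraph_reachable_mul (x * s⁻¹) hs).symm)

end Cayley

theorem cayleyGraph_even_order_has_perfectMatching_general
    {G : Type*} [Group G] [Fintype G]
    (heven : Even (Fintype.card G))
    (S : Set G)
    (hgen : Subgroup.closure S = ⊤) :
    ∃ M : (cayleyGraph S).Subgraph, M.IsPerfectMatching := by
  classical
  exact (cayleyGraph_connected S hgen).exists_isPerfectMatching_of_even_card
    (fun u v => ⟨cayleyGraphMulLeft S (v * u⁻¹), by simp [cayleyGraphMulLeft]⟩) heven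

/-- Let `G` be a finite group of even order and `S ⊆ G` a symmetric subset
(`S = S⁻¹`, `1 ∉ S`) generating `G`.  Then the Cayley graph of `G` with respect to `S` has a
perfect matching. -/
theorem cayleyGraph_even_order_has_perfectMatching
    {G : Type*} [Group G] [Fintype G]
    (heven : Even (Fintype.card G))
    (S : Set G) (hsymm : S⁻¹ = S) (hone : (1 : G) ∉ S)
    (hgen : Subgroup.closure S = ⊤) :
    ∃ M : (cayleyGraph S).Subgraph, M.IsPerfectMatching :=
  cayleyGraph_even_order_has_perfectMatching_general heven S hgen
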